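/- arXiv:2309.00698 — 8 statements merged into one kernel-verified Lean document; each statement's English description precedes it below -/
import Mathlib

section
/- Let g : ℝ → ℝ be three times continuously differentiable on a neighborhood of l with g(l) = 0 and g'(l) ≠ 0. Define Ψ(x) = x - g(x)/g'(l) + g(x)²·g''(l)/(2·g'(l)³). Then Ψ(l) = l, Ψ'(l) = 0, and Ψ''(l) = 0. -/
/-!
Writing `a = g'(l)`, `c = g''(l)`, the map is `Ψ = id + q ∘ g` with the quadratic
`q y = -y / a + c y² / (2 a³)`. Since `g l = 0`, the chain rule gives
`Ψ'(l) = 1 + q'(0) a = 1 - 1` and `Ψ''(l) = q''(0) a² + q'(0) c = c / a - c / a`.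
-/

section PerturbedIdentity

variable {𝕜 : Type*} [NontriviallyNormedField 𝕜] {q g : 𝕜 → 𝕜} {x : 𝕜}

theorem deriv_id_add_comp (hq : DifferentiableAt 𝕜 q (g x)) (hg : DifferentiableAt 𝕜 g x) :
    deriv (fun y => y + q (g y)) x = 1 + deriv q (g x) * deriv g x :=
  ((hasDerivAt_id x).add (hq.hasDerivAt.comp x hg.hasDerivAt)).deriv

theorem iteratedDeriv_two_id_add_comp (hq : ContDiffAt 𝕜 2 q (g x)) (hg : ContDiffAt 𝕜 2 g x) :
    iteratedDeriv 2 (fun y => y + q (g y)) x =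
      iteratedDeriv 2 q (g x) * deriv g x ^ 2 + deriv q (g x) * iteratedDeriv 2 g x := by
  change iteratedDeriv 2 (fun y => id y + (q ∘ g) y) x = _
  rw [iteratedDeriv_fun_add contDiffAt_id (hq.comp x hg), iteratedDeriv_id,
    iteratedDeriv_comp_two hq hg]
  simp

end PerturbedIdentity

section Quadratic

variable {𝕜 : Type*} [NontriviallyNormedField 𝕜] (α β : 𝕜)

theorem hasDerivAt_linear_add_sq (y : 𝕜) :
    HasDerivAt (fun y => α * y + β * y ^ 2) (α + 2 * β * y) y := by
  refine (((hasDerivAt_id' y).const_mul α).add ((hasDerivAt_pow 2 y).const_mul β)).congr_deriv ?_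
  push_cast
  ring

theorem iteratedDeriv_two_linear_add_sq (y : 𝕜) :
    iteratedDeriv 2 (fun y => α * y + β * y ^ 2) y = 2 * β := by
  rw [iteratedDeriv_succ, iteratedDeriv_one,
    funext fun y => (hasDerivAt_linear_add_sq α β y).deriv]
  simp

end Quadratic

theorem stmt_4 (g : ℝ → ℝ) (l : ℝ) (hg : ContDiffAt ℝ 3 g l)
    (hgl : g l = 0) (hg' : deriv g l ≠ 0) :
    let Ψ : ℝ → ℝ := fun x =>
      x - g x / deriv g l + g x ^ 2 * iteratedDeriv 2 g l / (2 * (deriv g l) ^ 3)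
    Ψ l = l ∧ deriv Ψ l = 0 ∧ iteratedDeriv 2 Ψ l = 0 := by
  intro Ψ
  set a := deriv g l
  set c := iteratedDeriv 2 g l
  set q : ℝ → ℝ := fun y => -a⁻¹ * y + c / (2 * a ^ 3) * y ^ 2
  have hΨ : Ψ = fun x => x + q (g x) := by
    funext x
    simp only [Ψ, q]
    ring
  have hq : ContDiff ℝ 2 q := by fun_prop
  have hq' : deriv q 0 = -a⁻¹ := by
    rw [(hasDerivAt_linear_add_sq _ _ 0).deriv]
    ring
  have hg2 : ContDiffAt ℝ 2 g l := hg.of_le (by norm_num)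
  refine ⟨by simp [Ψ, hgl], ?_, ?_⟩
  · rw [hΨ, deriv_id_add_comp (hq.differentiable two_ne_zero _)
      (hg2.differentiableAt two_ne_zero), hgl, hq']
    field_simp
    ring
  · rw [hΨ, iteratedDeriv_two_id_add_comp hq.contDiffAt hg2, iteratedDeriv_two_linear_add_sq,
      hgl, hq']
    field_simp
    ring
end

section
/- Let g : ℝ → ℝ be three times continuously differentiable on a neighborhood of l with g(l) = 0 and g'(l) ≠ 0. Define Ψ(x) = x - g(x)/g'(l) + g(x)²·g''(l)/(2·g'(l)³). Then there exist C > 0 and δ > 0 such that for all x with |x - l| < δ, |Ψ(x) - l| ≤ C·|x - l|³. -/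
/-!
Write `t = x - l`, `a = g'(l)`, `b = g''(l)`. Taylor's theorem at order three gives
`g x = a t + b t² / 2 + r x` with `r = O(t³)`, hence `q x := g x - a t = O(t²)`. Substituting
`g x = a t + q x` into `Ψ` yields `Ψ x - l = -r x / a + b / (2 a³) · q x · (q x + 2 a t)`,
a sum of two `O(t³)` terms.
-/

open Set Filter Topology Asymptotics Metric Nat

noncomputable def thirdOrderStep (g : ℝ → ℝ) (a b x : ℝ) : ℝ :=
  x - g x / a + g x ^ 2 * b / (2 * a ^ 3)

theorem taylorWithinEval_of_isOpen {E : Type*} [NormedAddCommGroup E] [NormedSpace ℝ E]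
    (f : ℝ → E) (n : ℕ) {s : Set ℝ} (hs : IsOpen s) {x₀ : ℝ} (hx₀ : x₀ ∈ s) :
    taylorWithinEval f n s x₀ = taylorWithinEval f n univ x₀ := by
  ext x
  simp only [taylor_within_apply, iteratedDerivWithin_univ, iteratedDerivWithin_of_isOpen hs hx₀]

/-- The order-`n + 1` remainder is `o((x - x₀)^(n + 1))` and differs from the order-`n` one by a
multiple of `(x - x₀)^(n + 1)`. -/
theorem ContDiffAt.isBigO_sub_taylorWithinEval {E : Type*} [NormedAddCommGroup E]
    [NormedSpace ℝ E] {f : ℝ → E} {x₀ : ℝ} {n : ℕ} (hf : ContDiffAt ℝ (n + 1) f x₀) :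
    (fun x ↦ f x - taylorWithinEval f n univ x₀ x) =O[𝓝 x₀] fun x ↦ (x - x₀) ^ (n + 1) := by
  obtain ⟨u, hu, hfu⟩ := hf.contDiffOn le_rfl (by simp)
  obtain ⟨ε, hε, hball⟩ := Metric.mem_nhds_iff.mp hu
  have hlittle := taylor_isLittleO (n := n + 1) (convex_ball x₀ ε) (mem_ball_self hε)
    (by exact_mod_cast hfu.mono hball)
  rw [nhdsWithin_eq_nhds.2 (ball_mem_nhds x₀ hε),
    taylorWithinEval_of_isOpen f _ isOpen_ball (mem_ball_self hε)] at hlittle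
  have hterm : (fun x ↦ (((n + 1 : ℝ) * n !)⁻¹ * (x - x₀) ^ (n + 1)) •
      iteratedDerivWithin (n + 1) f univ x₀) =O[𝓝 x₀] fun x ↦ (x - x₀) ^ (n + 1) := by
    simpa using (isBigO_const_mul_self ((n + 1 : ℝ) * n !)⁻¹ (fun x ↦ (x - x₀) ^ (n + 1)) _).smul
      (isBigO_const_one ℝ (iteratedDerivWithin (n + 1) f univ x₀) (𝓝 x₀))
  refine (hlittle.isBigO.add hterm).congr_left fun x ↦ ?_
  rw [taylorWithinEval_succ]
  abel

theorem Asymptotics.IsBigO.exists_pos_forall_dist_lt {α E F : Type*} [PseudoMetricSpace α]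
    [Norm E] [SeminormedAddCommGroup F] {f : α → E} {g : α → F} {x₀ : α} (h : f =O[𝓝 x₀] g) :
    ∃ C > 0, ∃ δ > 0, ∀ x, dist x x₀ < δ → ‖f x‖ ≤ C * ‖g x‖ := by
  obtain ⟨C, hC, hfg⟩ := h.exists_pos
  obtain ⟨δ, hδ, hball⟩ := Metric.eventually_nhds_iff.mp hfg.bound
  exact ⟨C, hC, δ, hδ, hball⟩

theorem thirdOrderStep_sub_isBigO {g : ℝ → ℝ} {l a b : ℝ} (ha : a ≠ 0)
    (hg : (fun x ↦ g x - (a * (x - l) + b / 2 * (x - l) ^ 2)) =O[𝓝 l] fun x ↦ (x - l) ^ 3) :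
    (fun x ↦ thirdOrderStep g a b x - l) =O[𝓝 l] fun x ↦ (x - l) ^ 3 := by
  have hcube : (fun x ↦ (x - l) ^ 3) =O[𝓝 l] fun x ↦ (x - l) ^ 2 := by
    simpa only [← norm_pow, isBigO_norm_left, isBigO_norm_right] using
      (isLittleO_pow_sub_pow_sub l (by norm_num : 2 < 3)).isBigO
  have hsq : (fun x ↦ (x - l) ^ 2) =O[𝓝 l] fun x ↦ x - l := by
    simpa only [← norm_pow, isBigO_norm_left, pow_one, isBigO_norm_right] using
      (isLittleO_pow_sub_pow_sub l (by norm_num : 1 < 2)).isBigO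
  have hquad : (fun x ↦ g x - a * (x - l)) =O[𝓝 l] fun x ↦ (x - l) ^ 2 :=
    ((isBigO_const_mul_self (b / 2) _ _).add (hg.trans hcube)).congr_left fun x ↦ by ring
  have hlin : (fun x ↦ g x - a * (x - l) + 2 * a * (x - l)) =O[𝓝 l] fun x ↦ x - l :=
    (hquad.trans hsq).add (isBigO_const_mul_self _ _ _)
  have hprod := (hquad.mul hlin).const_mul_left (b / (2 * a ^ 3))
  refine ((hg.const_mul_left (-1 / a)).add (hprod.congr_right fun x ↦ by ring)).congr_left
    fun x ↦ ?_
  unfold thirdOrderStep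
  field_simp
  ring

theorem stmt_5 (g : ℝ → ℝ) (l : ℝ) (hg : ContDiffAt ℝ 3 g l)
    (hgl : g l = 0) (hg' : deriv g l ≠ 0) :
    ∃ C > 0, ∃ δ > 0, ∀ x : ℝ, |x - l| < δ →
      |(x - g x / deriv g l + g x ^ 2 * iteratedDeriv 2 g l / (2 * (deriv g l) ^ 3)) - l|
        ≤ C * |x - l| ^ 3 := by
  have htaylor := ContDiffAt.isBigO_sub_taylorWithinEval (n := 2) hg
  have hquad : ∀ x, taylorWithinEval g 2 univ l x
      = deriv g l * (x - l) + iteratedDeriv 2 g l / 2 * (x - l) ^ 2 := fun x ↦ by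
    simp only [taylorWithinEval_succ, taylor_within_zero_eval, hgl, iteratedDerivWithin_univ,
      smul_eq_mul]
    norm_num
    ring
  simp only [hquad] at htaylor
  obtain ⟨C, hC, δ, hδ, hbound⟩ := (thirdOrderStep_sub_isBigO hg' htaylor).exists_pos_forall_dist_lt
  refine ⟨C, hC, δ, hδ, fun x hx ↦ ?_⟩
  simpa [thirdOrderStep, Real.dist_eq, abs_pow] using hbound x (by rwa [Real.dist_eq])
end

section
/- Let g : ℝ → ℝ be four times continuously differentiable on a neighborhood of l with g(l) = 0 and g'(l) ≠ 0. Define Θ(x) = x - g(x)/g'(l) + g(x)²·g''(l)/(2·g'(l)³) - g(x)³·(3·g''(l)² - g'(l)·g'''(l))/(6·g'(l)⁵). Then Θ(l) = l, Θ'(l) = 0, Θ''(l) = 0, and Θ'''(l) = 0. -/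
/-!
Write `Θ = id + P ∘ g` with `P` the cubic `inverseTaylorCubic (g' l) (g'' l) (g''' l)`. Then
`l + P` is the third-order Taylor polynomial at `0` of the local inverse of `g`, so `P ∘ g` agrees
with `x ↦ x - l` to third order at `l`: by Faà di Bruno, its first three derivatives at `l` are
`-1, 0, 0`, which cancel those of the identity.
-/

section

variable {𝕜 : Type*} [NontriviallyNormedField 𝕜]

theorem iteratedDeriv_cubic_zero (p q r : 𝕜) (n : ℕ) :
    iteratedDeriv n (fun y => p * y + q * y ^ 2 + r * y ^ 3) 0 =
      (if n = 1 then p else 0) + (if n = 2 then 2 * q else 0) + (if n = 3 then 6 * r else 0) := by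
  have hlin : iteratedDeriv n (fun y => p * y) (0 : 𝕜) = p * iteratedDeriv n (fun y => y) 0 :=
    iteratedDeriv_const_mul_field p (fun y => y)
  rw [iteratedDeriv_fun_add (by fun_prop) (by fun_prop),
    iteratedDeriv_fun_add (by fun_prop) (by fun_prop), hlin]
  simp only [iteratedDeriv_const_mul_field, iteratedDeriv_fun_pow_zero, iteratedDeriv_fun_id_zero]
  split_ifs <;> simp_all [Nat.factorial, mul_comm]

noncomputable def inverseTaylorCubic (a b c : 𝕜) : 𝕜 → 𝕜 :=
  fun y => -a⁻¹ * y + b / (2 * a ^ 3) * y ^ 2 + (a * c - 3 * b ^ 2) / (6 * a ^ 5) * y ^ 3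

theorem contDiff_inverseTaylorCubic (a b c : 𝕜) {n : WithTop ℕ∞} :
    ContDiff 𝕜 n (inverseTaylorCubic a b c) := by
  unfold inverseTaylorCubic
  fun_prop

variable [CharZero 𝕜]

theorem iteratedDeriv_inverseTaylorCubic_zero (a b c : 𝕜) :
    deriv (inverseTaylorCubic a b c) 0 = -a⁻¹ ∧
      iteratedDeriv 2 (inverseTaylorCubic a b c) 0 = b / a ^ 3 ∧
      iteratedDeriv 3 (inverseTaylorCubic a b c) 0 = (a * c - 3 * b ^ 2) / a ^ 5 := by
  have h (n : ℕ) : iteratedDeriv n (inverseTaylorCubic a b c) 0 = _ :=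
    iteratedDeriv_cubic_zero _ _ _ n
  refine ⟨by simpa using h 1, ?_, ?_⟩
  · rw [h 2]
    field_simp
    norm_num
  · rw [h 3]
    field_simp
    norm_num

theorem iteratedDeriv_inverseTaylorCubic_comp {g : 𝕜 → 𝕜} {l : 𝕜}
    (hg : ContDiffAt 𝕜 3 g l) (hgl : g l = 0) (hg' : deriv g l ≠ 0) :
    let P := inverseTaylorCubic (deriv g l) (iteratedDeriv 2 g l) (iteratedDeriv 3 g l)
    deriv (P ∘ g) l = -1 ∧ iteratedDeriv 2 (P ∘ g) l = 0 ∧ iteratedDeriv 3 (P ∘ g) l = 0 := by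
  intro P
  obtain ⟨hP1, hP2, hP3⟩ := iteratedDeriv_inverseTaylorCubic_zero (deriv g l)
    (iteratedDeriv 2 g l) (iteratedDeriv 3 g l)
  have hP {n : WithTop ℕ∞} : ContDiffAt 𝕜 n P (g l) :=
    (contDiff_inverseTaylorCubic _ _ _).contDiffAt
  refine ⟨?_, ?_, ?_⟩
  · rw [deriv_comp l (hP.differentiableAt one_ne_zero) (hg.differentiableAt (by norm_num)), hgl,
      hP1]
    field_simp
  · rw [iteratedDeriv_comp_two hP (hg.of_le (by norm_num)), hgl, hP1, hP2]
    field_simp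
    ring
  · rw [iteratedDeriv_comp_three hP hg, hgl, hP1, hP2, hP3]
    field_simp
    ring

end

theorem stmt_6 (g : ℝ → ℝ) (l : ℝ) (hg : ContDiffAt ℝ 4 g l)
    (hgl : g l = 0) (hg' : deriv g l ≠ 0) :
    let Θ : ℝ → ℝ := fun x =>
      x - g x / deriv g l + g x ^ 2 * iteratedDeriv 2 g l / (2 * (deriv g l) ^ 3)
        - g x ^ 3 * (3 * (iteratedDeriv 2 g l) ^ 2 - deriv g l * iteratedDeriv 3 g l)
          / (6 * (deriv g l) ^ 5)
    Θ l = l ∧ deriv Θ l = 0 ∧ iteratedDeriv 2 Θ l = 0 ∧ iteratedDeriv 3 Θ l = 0 := by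
  intro Θ
  have hg3 : ContDiffAt ℝ 3 g l := hg.of_le (by norm_num)
  obtain ⟨h1, h2, h3⟩ := iteratedDeriv_inverseTaylorCubic_comp hg3 hgl hg'
  set P := inverseTaylorCubic (deriv g l) (iteratedDeriv 2 g l) (iteratedDeriv 3 g l)
  have hΘ : Θ = fun x => x + (P ∘ g) x := by
    funext x
    simp only [Θ, P, inverseTaylorCubic, Function.comp_apply]
    ring
  have hΘn {n : ℕ} (hn : n ≤ 3) :
      iteratedDeriv n Θ l = iteratedDeriv n (fun x => x) l + iteratedDeriv n (P ∘ g) l := by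
    have hPg : ContDiffAt ℝ 3 (P ∘ g) l :=
      (contDiff_inverseTaylorCubic _ _ _).contDiffAt.comp l hg3
    rw [hΘ]
    exact iteratedDeriv_fun_add contDiffAt_id (hPg.of_le (by exact_mod_cast hn))
  refine ⟨by simp [Θ, hgl], ?_, ?_, ?_⟩
  · rw [← iteratedDeriv_one, hΘn (by norm_num)]
    simp [h1]
  · rw [hΘn (by norm_num)]
    simp [h2, iteratedDeriv_fun_id]
  · rw [hΘn le_rfl]
    simp [h3, iteratedDeriv_fun_id]
end

section
/- Let g : ℝ → ℝ be four times continuously differentiable on a neighborhood of l with g(l) = 0 and g'(l) ≠ 0. Define Θ(x) = x - g(x)/g'(l) + g(x)²·g''(l)/(2·g'(l)³) - g(x)³·(3·g''(l)² - g'(l)·g'''(l))/(6·g'(l)⁵). Then there exist C > 0 and δ > 0 such that for all x with |x - l| < δ, |Θ(x) - l| ≤ C·|x - l|⁴. -/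
/-!
Put `t = x - l`, `β = g''(l) / (2 g'(l))`, `γ = g'''(l) / (6 g'(l))`. Then
`Θ(x) - l = t - Φ(g(x) / g'(l))` with `Φ(u) = u - β u² + (2β² - γ) u³`, the cubic truncation of the
reversion of the series `u = t + β t² + γ t³`. Taylor's theorem gives
`g(x) / g'(l) = t + β t² + γ t³ + O(t⁴)`, and substituting this into `Φ` the terms of order
`t`, `t²`, `t³` cancel.
-/

open Filter Topology Asymptotics Metric Nat

theorem ContDiffAt.isBigO_sub_taylor {E : Type*} [NormedAddCommGroup E] [NormedSpace ℝ E]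
    {f : ℝ → E} {x₀ : ℝ} {n : ℕ} (hf : ContDiffAt ℝ (n + 1) f x₀) :
    (fun x ↦ f x - ∑ k ∈ Finset.range (n + 1), ((k ! : ℝ)⁻¹ * (x - x₀) ^ k) • iteratedDeriv k f x₀)
      =O[𝓝 x₀] fun x ↦ (x - x₀) ^ (n + 1) := by
  obtain ⟨U, hU, hfU⟩ := hf.contDiffOn le_rfl (by simp)
  obtain ⟨ε, hε, hεU⟩ := Metric.mem_nhds_iff.1 hU
  have hlittle := taylor_isLittleO (convex_ball x₀ ε) (mem_ball_self hε)
    (n := n + 1) (by exact_mod_cast hfU.mono hεU)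
  rw [nhdsWithin_eq_nhds.2 (ball_mem_nhds x₀ hε)] at hlittle
  have hderiv (k : ℕ) : iteratedDerivWithin k f (ball x₀ ε) x₀ = iteratedDeriv k f x₀ :=
    iteratedDerivWithin_of_isOpen isOpen_ball (mem_ball_self hε)
  have htop : (fun x ↦ (((n + 1) ! : ℝ)⁻¹ * (x - x₀) ^ (n + 1)) • iteratedDeriv (n + 1) f x₀)
      =O[𝓝 x₀] fun x ↦ (x - x₀) ^ (n + 1) := by
    simpa using ((isBigO_refl (fun x ↦ (x - x₀) ^ (n + 1)) _).const_mul_left _).smul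
      (isBigO_const_one ℝ (iteratedDeriv (n + 1) f x₀) (𝓝 x₀))
  refine (hlittle.isBigO.add htop).congr_left fun x ↦ ?_
  simp only [taylor_within_apply, hderiv, Finset.sum_range_succ _ (n + 1)]
  abel

section Reversion

variable {α : Type*} {L : Filter α} {t : α → ℝ}

theorem isBigO_pow_pow_of_tendsto_zero (ht : Tendsto t L (𝓝 0)) {k m : ℕ} (hkm : k ≤ m) :
    (fun x ↦ t x ^ m) =O[L] fun x ↦ t x ^ k := by
  rcases hkm.eq_or_lt with rfl | hlt
  · exact isBigO_refl _ _
  · exact (isLittleO_pow_pow hlt).isBigO.comp_tendsto ht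

theorem isBigO_sub_cubic_reversion (ht : Tendsto t L (𝓝 0)) {u : α → ℝ} (β γ : ℝ)
    (hu : (fun x ↦ u x - (t x + β * t x ^ 2 + γ * t x ^ 3)) =O[L] fun x ↦ t x ^ 4) :
    (fun x ↦ t x - (u x - β * u x ^ 2 + (2 * β ^ 2 - γ) * u x ^ 3)) =O[L] fun x ↦ t x ^ 4 := by
  set r := fun x ↦ u x - (t x + β * t x ^ 2 + γ * t x ^ 3)
  have ht1 : t =O[L] fun _ ↦ (1 : ℝ) := ht.isBigO_one ℝ
  have hw : (fun x ↦ u x - t x) =O[L] fun x ↦ t x ^ 2 := by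
    have h := (hu.trans (isBigO_pow_pow_of_tendsto_zero ht (by norm_num : 2 ≤ 4))).add
      (((isBigO_refl (fun x ↦ t x ^ 2) L).const_mul_left β).add
        ((isBigO_pow_pow_of_tendsto_zero ht (by norm_num : 2 ≤ 3)).const_mul_left γ))
    exact h.congr_left fun x ↦ by ring
  have hw1 : (fun x ↦ u x - t x) =O[L] fun _ ↦ (1 : ℝ) := hw.trans ((ht.pow 2).isBigO_one ℝ)
  have hr : (fun x ↦ r x * (1 - 2 * β * t x)) =O[L] fun x ↦ t x ^ 4 := by
    simpa using hu.mul ((isBigO_refl (fun _ ↦ (1 : ℝ)) L).sub (ht1.const_mul_left (2 * β)))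
  have hw2 : (fun x ↦ (u x - t x) ^ 2 * (-β + (2 * β ^ 2 - γ) * (3 * t x + (u x - t x))))
      =O[L] fun x ↦ t x ^ 4 :=
    ((hw.pow 2).mul ((isBigO_const_const (-β) one_ne_zero L).add
      (((ht1.const_mul_left 3).add hw1).const_mul_left (2 * β ^ 2 - γ)))).congr_right
      fun x ↦ by ring
  have htw : (fun x ↦ t x ^ 2 * (u x - t x)) =O[L] fun x ↦ t x ^ 4 :=
    ((isBigO_refl (fun x ↦ t x ^ 2) L).mul hw).congr_right fun x ↦ by ring
  -- with `w = u - t = O(t²)`, the terms of order `t²` and `t³` in `t - Φ(u)` cancel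
  have h := (((hr.sub ((isBigO_refl (fun x ↦ t x ^ 4) L).const_mul_left (2 * β * γ))).add hw2).add
    (htw.const_mul_left (3 * (2 * β ^ 2 - γ)))).neg_left
  refine h.congr_left fun x ↦ ?_
  simp only [r]
  ring

end Reversion

theorem stmt_7 (g : ℝ → ℝ) (l : ℝ) (hg : ContDiffAt ℝ 4 g l)
    (hgl : g l = 0) (hg' : deriv g l ≠ 0) :
    ∃ C > 0, ∃ δ > 0, ∀ x : ℝ, |x - l| < δ →
      |(x - g x / deriv g l + g x ^ 2 * iteratedDeriv 2 g l / (2 * (deriv g l) ^ 3)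
        - g x ^ 3 * (3 * (iteratedDeriv 2 g l) ^ 2 - deriv g l * iteratedDeriv 3 g l)
          / (6 * (deriv g l) ^ 5)) - l| ≤ C * |x - l| ^ 4 := by
  set a := deriv g l
  set b := iteratedDeriv 2 g l
  set c := iteratedDeriv 3 g l
  have hu : (fun x ↦ g x / a - ((x - l) + b / (2 * a) * (x - l) ^ 2 + c / (6 * a) * (x - l) ^ 3))
      =O[𝓝 l] fun x ↦ (x - l) ^ 4 := by
    refine ((ContDiffAt.isBigO_sub_taylor (n := 3) hg).const_mul_left a⁻¹).congr_left fun x ↦ ?_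
    simp only [Finset.sum_range_succ, Finset.sum_range_zero, iteratedDeriv_zero,
      iteratedDeriv_one, hgl, smul_eq_mul]
    norm_num [Nat.factorial]
    field_simp
    ring
  have ht : Tendsto (fun x ↦ x - l) (𝓝 l) (𝓝 0) := tendsto_sub_nhds_zero_iff.2 tendsto_id
  have hΘ : (fun x ↦ x - g x / a + g x ^ 2 * b / (2 * a ^ 3)
      - g x ^ 3 * (3 * b ^ 2 - a * c) / (6 * a ^ 5) - l) =O[𝓝 l] fun x ↦ (x - l) ^ 4 :=
    (isBigO_sub_cubic_reversion ht _ _ hu).congr_left fun x ↦ by field_simp; ring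
  obtain ⟨C, hC, hbound⟩ := isBigO_iff'.1 hΘ
  obtain ⟨δ, hδ, hball⟩ := Metric.eventually_nhds_iff.1 hbound
  exact ⟨C, hC, δ, hδ, fun x hx ↦ by simpa [Real.dist_eq, abs_pow] using hball hx⟩
end

section
/- Let f : ℝ → ℝ be twice differentiable at l with f(l) = l and f'(l) ≠ 1. Set α = f'(l)/(1 - f'(l)) and β = -f''(l)/(2·(1 - f'(l))³). Define T(x) = f(x) + α·(f(x) - x) + β·(f(x) - x)². Then T(l) = l, T'(l) = 0, and T''(l) = 0. -/
/-! With `g = f - id` we have `g l = 0`, so at `l` the correction terms contribute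
`T' = (1 + α) f' - α` and `T'' = (1 + α) f'' + 2 β (f' - 1)²`; the constants `α` and `β`
are exactly the ones that make these vanish. -/

open Filter Topology

variable {𝕜 : Type*} [NontriviallyNormedField 𝕜]

def accelerate (α β : 𝕜) (f : 𝕜 → 𝕜) (x : 𝕜) : 𝕜 :=
  f x + α * (f x - x) + β * (f x - x) ^ 2

theorem hasDerivAt_accelerate (α β : 𝕜) {f : 𝕜 → 𝕜} {f' x : 𝕜} (hf : HasDerivAt f f' x) :
    HasDerivAt (accelerate α β f) (f' + α * (f' - 1) + 2 * β * (f x - x) * (f' - 1)) x := by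
  have hg : HasDerivAt (fun y => f y - y) (f' - 1) x := hf.sub (hasDerivAt_id x)
  exact ((hf.add (hg.const_mul α)).add ((hg.fun_pow 2).const_mul β)).congr_deriv
    (by push_cast; ring)

theorem deriv_accelerate_eventuallyEq (α β : 𝕜) {f : 𝕜 → 𝕜} {l : 𝕜}
    (hf : ∀ᶠ x in 𝓝 l, DifferentiableAt 𝕜 f x) :
    deriv (accelerate α β f) =ᶠ[𝓝 l]
      fun x => deriv f x + α * (deriv f x - 1) + 2 * β * (f x - x) * (deriv f x - 1) := by
  filter_upwards [hf] with x hx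
  exact (hasDerivAt_accelerate α β hx.hasDerivAt).deriv

theorem hasDerivAt_deriv_accelerate (α β : 𝕜) {f : 𝕜 → 𝕜} {f'' l : 𝕜}
    (hf : ∀ᶠ x in 𝓝 l, DifferentiableAt 𝕜 f x) (hf2 : HasDerivAt (deriv f) f'' l) :
    HasDerivAt (deriv (accelerate α β f))
      (f'' + α * f'' + 2 * β * ((deriv f l - 1) * (deriv f l - 1) + (f l - l) * f'')) l := by
  have hg : HasDerivAt (fun x => f x - x) (deriv f l - 1) l :=
    hf.self_of_nhds.hasDerivAt.sub (hasDerivAt_id l)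
  have hg' : HasDerivAt (fun x => deriv f x - 1) f'' l := hf2.sub_const 1
  refine HasDerivAt.congr_of_eventuallyEq ?_ (deriv_accelerate_eventuallyEq α β hf)
  convert (hf2.add (hg'.const_mul α)).add ((hg.mul hg').const_mul (2 * β)) using 1
  ext x
  simp only [Pi.add_apply, Pi.mul_apply]
  ring

theorem stmt_9 (f : ℝ → ℝ) (l : ℝ)
    (hf : ∀ᶠ x in nhds l, DifferentiableAt ℝ f x)
    (hf2 : DifferentiableAt ℝ (deriv f) l)
    (hfl : f l = l) (hf' : deriv f l ≠ 1) :
    let α := deriv f l / (1 - deriv f l)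
    let β := -iteratedDeriv 2 f l / (2 * (1 - deriv f l) ^ 3)
    let T : ℝ → ℝ := fun x => f x + α * (f x - x) + β * (f x - x) ^ 2
    T l = l ∧ deriv T l = 0 ∧ iteratedDeriv 2 T l = 0 := by
  intro α β T
  change accelerate α β f l = l ∧ deriv (accelerate α β f) l = 0 ∧
    iteratedDeriv 2 (accelerate α β f) l = 0
  have hfl' : 1 - deriv f l ≠ 0 := sub_ne_zero.mpr hf'.symm
  have iteratedDeriv_two_eq (g : ℝ → ℝ) : iteratedDeriv 2 g = deriv (deriv g) := by
    rw [iteratedDeriv_succ, iteratedDeriv_one]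
  refine ⟨by simp [accelerate, hfl], ?_, ?_⟩
  · rw [(hasDerivAt_accelerate α β hf.self_of_nhds.hasDerivAt).deriv, hfl]
    simp only [α]
    field_simp
    ring
  · rw [iteratedDeriv_two_eq, (hasDerivAt_deriv_accelerate α β hf hf2.hasDerivAt).deriv, hfl]
    simp only [α, β, iteratedDeriv_two_eq]
    field_simp
    ring
end

section
/- Let f : ℝ → ℝ be three times differentiable at l with f(l) = l and f'(l) ≠ 1. Set α = f'(l)/(1 - f'(l)), β = -f''(l)/(2·(1 - f'(l))³), and γ = (f'''(l)·(1 - f'(l)) + 3·f''(l)²)/(6·(1 - f'(l))⁵). Define T(x) = f(x) + α·(f(x) - x) + β·(f(x) - x)² + γ·(f(x) - x)³. Then T(l) = l, T'(l) = 0, T''(l) = 0, and T'''(l) = 0. -/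
/-!
With `g x = f x - x` we have `g l = 0` and `T x = x + q (g x)` for the cubic
`q t = (1 + α) t + β t² + γ t³`. The coefficients make `q` the third-order Taylor polynomial at `0`
of `t ↦ l - g⁻¹ t`, which is why `T x - l = q (g x) - (l - g⁻¹ (g x))` vanishes to fourth
order at `l`. Concretely, the chain rule up to order three (Faà di Bruno) expresses the
derivatives of `T` at `l` through those of `f`, and they cancel.
-/

open Filter Topology

structure HasThreeDerivsAt (f f₁ f₂ : ℝ → ℝ) (f₃ x : ℝ) : Prop where
  first : ∀ᶠ y in 𝓝 x, HasDerivAt f (f₁ y) y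
  second : ∀ᶠ y in 𝓝 x, HasDerivAt f₁ (f₂ y) y
  third : HasDerivAt f₂ f₃ x

namespace HasThreeDerivsAt

variable {f f₁ f₂ : ℝ → ℝ} {f₃ x : ℝ}

theorem of_differentiableAt (hf : ∀ᶠ y in 𝓝 x, DifferentiableAt ℝ f y)
    (hf₂ : ∀ᶠ y in 𝓝 x, DifferentiableAt ℝ (deriv f) y)
    (hf₃ : DifferentiableAt ℝ (deriv (deriv f)) x) :
    HasThreeDerivsAt f (deriv f) (deriv (deriv f)) (deriv (deriv (deriv f)) x) x :=
  ⟨hf.mono fun _ h ↦ h.hasDerivAt, hf₂.mono fun _ h ↦ h.hasDerivAt, hf₃.hasDerivAt⟩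

theorem deriv_eq (h : HasThreeDerivsAt f f₁ f₂ f₃ x) : deriv f x = f₁ x :=
  h.first.self_of_nhds.deriv

theorem deriv_eventuallyEq (h : HasThreeDerivsAt f f₁ f₂ f₃ x) : deriv f =ᶠ[𝓝 x] f₁ :=
  h.first.mono fun _ hy ↦ hy.deriv

theorem iteratedDeriv_two (h : HasThreeDerivsAt f f₁ f₂ f₃ x) : iteratedDeriv 2 f x = f₂ x := by
  rw [iteratedDeriv_succ, iteratedDeriv_one, h.deriv_eventuallyEq.deriv_eq,
    h.second.self_of_nhds.deriv]

theorem iteratedDeriv_three (h : HasThreeDerivsAt f f₁ f₂ f₃ x) : iteratedDeriv 3 f x = f₃ := by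
  have h₂ : deriv (deriv f) =ᶠ[𝓝 x] f₂ :=
    h.deriv_eventuallyEq.deriv.trans (h.second.mono fun _ hy ↦ hy.deriv)
  rw [iteratedDeriv_succ, iteratedDeriv_succ, iteratedDeriv_one, h₂.deriv_eq, h.third.deriv]

theorem add_linear (h : HasThreeDerivsAt f f₁ f₂ f₃ x) (c : ℝ) :
    HasThreeDerivsAt (fun y ↦ f y + c * y) (fun y ↦ f₁ y + c) f₂ f₃ x where
  first := h.first.mono fun y hy ↦
    (hy.add ((hasDerivAt_id' y).const_mul c)).congr_deriv (by rw [mul_one])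
  second := h.second.mono fun _ hy ↦ hy.add_const c
  third := h.third

/-- Faà di Bruno's formula up to order three. -/
theorem comp {p p₁ p₂ : ℝ → ℝ} {p₃ : ℝ} (hp : HasThreeDerivsAt p p₁ p₂ p₃ (f x))
    (h : HasThreeDerivsAt f f₁ f₂ f₃ x) :
    HasThreeDerivsAt (p ∘ f) (fun y ↦ p₁ (f y) * f₁ y)
      (fun y ↦ p₂ (f y) * f₁ y ^ 2 + p₁ (f y) * f₂ y)
      (p₃ * f₁ x ^ 3 + 3 * p₂ (f x) * f₁ x * f₂ x + p₁ (f x) * f₃) x := by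
  have hcont : Tendsto f (𝓝 x) (𝓝 (f x)) := h.first.self_of_nhds.continuousAt.tendsto
  have hp₁ := hcont.eventually hp.first
  have hp₂ := hcont.eventually hp.second
  refine ⟨?_, ?_, ?_⟩
  · filter_upwards [h.first, hp₁] with y hy hpy
    exact hpy.comp y hy
  · filter_upwards [h.first, h.second, hp₂] with y hy hy₂ hpy
    exact ((hpy.comp y hy).mul hy₂).congr_deriv (by simp only [Function.comp]; ring)
  · have hf := h.first.self_of_nhds
    have hp₂f := hp.third.comp x hf
    have hp₁f := hp.second.self_of_nhds.comp x hf
    exact ((hp₂f.mul (h.second.self_of_nhds.pow 2)).add (hp₁f.mul h.third)).congr_deriv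
      (by simp only [Function.comp, Pi.pow_apply]; ring)

end HasThreeDerivsAt

theorem hasThreeDerivsAt_cubic (a b c t : ℝ) :
    HasThreeDerivsAt (fun s ↦ a * s + b * s ^ 2 + c * s ^ 3)
      (fun s ↦ a + 2 * b * s + 3 * c * s ^ 2) (fun s ↦ 2 * b + 6 * c * s) (6 * c) t where
  first := Eventually.of_forall fun s ↦ by
    have := (((hasDerivAt_id' s).const_mul a).add (((hasDerivAt_pow 2 s).const_mul b))).add
      ((hasDerivAt_pow 3 s).const_mul c)
    exact this.congr_deriv (by push_cast; ring)
  second := Eventually.of_forall fun s ↦ by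
    have := ((hasDerivAt_id' s).const_mul (2 * b)).const_add a |>.add
      ((hasDerivAt_pow 2 s).const_mul (3 * c))
    exact this.congr_deriv (by push_cast; ring)
  third := ((hasDerivAt_id' t).const_mul (6 * c)).const_add (2 * b) |>.congr_deriv (mul_one _)

theorem stmt_10 (f : ℝ → ℝ) (l : ℝ)
    (hf : ∀ᶠ x in nhds l, DifferentiableAt ℝ f x)
    (hf2 : ∀ᶠ x in nhds l, DifferentiableAt ℝ (deriv f) x)
    (hf3 : DifferentiableAt ℝ (deriv (deriv f)) l)
    (hfl : f l = l) (hf' : deriv f l ≠ 1) :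
    let α := deriv f l / (1 - deriv f l)
    let β := -iteratedDeriv 2 f l / (2 * (1 - deriv f l) ^ 3)
    let γ := (iteratedDeriv 3 f l * (1 - deriv f l) + 3 * (iteratedDeriv 2 f l) ^ 2)
      / (6 * (1 - deriv f l) ^ 5)
    let T : ℝ → ℝ := fun x =>
      f x + α * (f x - x) + β * (f x - x) ^ 2 + γ * (f x - x) ^ 3
    T l = l ∧ deriv T l = 0 ∧ iteratedDeriv 2 T l = 0 ∧ iteratedDeriv 3 T l = 0 := by
  intro α β γ T
  have ha : 1 - deriv f l ≠ 0 := sub_ne_zero.mpr hf'.symm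
  have hg := (HasThreeDerivsAt.of_differentiableAt hf hf2 hf3).add_linear (-1)
  have hT := ((hasThreeDerivsAt_cubic (1 + α) β γ _).comp hg).add_linear 1
  have hT_eq : T = fun y ↦ (1 + α) * (f y + -1 * y) + β * (f y + -1 * y) ^ 2
      + γ * (f y + -1 * y) ^ 3 + 1 * y := by
    funext y
    ring
  have hg_l : f l + -1 * l = 0 := by rw [hfl]; ring
  rw [hT_eq]
  refine ⟨?_, hT.deriv_eq.trans ?_, hT.iteratedDeriv_two.trans ?_,
    hT.iteratedDeriv_three.trans ?_⟩ <;>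
    simp only [hg_l, α, β, γ, iteratedDeriv_succ, iteratedDeriv_zero]
  all_goals field_simp; ring
end

section
/- Let g(x) = arctan(x) and l = 0. The second-order map Φ(x) = x - arctan(x)/1 = x - arctan(x) satisfies: for every x₀ ∈ ℝ, the sequence Uₙ₊₁ = Φ(Uₙ) with U₀ = x₀ converges to 0. -/
lemma arctan_le_self {x : ℝ} (hx : 0 ≤ x) : Real.arctan x ≤ x := by
  rcases lt_or_ge x (Real.pi / 2) with h | h
  · calc Real.arctan x ≤ Real.arctan (Real.tan x) :=
          Real.arctan_strictMono.monotone (Real.le_tan hx h)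
      _ = x := Real.arctan_tan (by linarith [Real.pi_pos]) h
  · linarith [Real.arctan_lt_pi_div_two x]

lemma aux_nonneg (U : ℕ → ℝ) (h0 : 0 ≤ U 0)
    (hrec : ∀ n, U (n + 1) = U n - Real.arctan (U n)) :
    Filter.Tendsto U Filter.atTop (nhds 0) := by
  have hpos : ∀ n, 0 ≤ U n := by
    intro n
    induction n with
    | zero => exact h0
    | succ k ih => rw [hrec k]; linarith [arctan_le_self ih]
  have hanti : Antitone U := by
    apply antitone_nat_of_succ_le
    intro n
    rw [hrec n]
    have := Real.arctan_strictMono.monotone (hpos n)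
    rw [Real.arctan_zero] at this
    linarith
  set L := ⨅ i, U i with hLdef
  have hL : Filter.Tendsto U Filter.atTop (nhds L) :=
    tendsto_atTop_ciInf hanti ⟨0, fun y ⟨n, hn⟩ => hn ▸ hpos n⟩
  have hL2 : Filter.Tendsto (fun n => U (n + 1)) Filter.atTop (nhds L) :=
    hL.comp (Filter.tendsto_add_atTop_nat 1)
  have hL3 : Filter.Tendsto (fun n => U n - Real.arctan (U n)) Filter.atTop
      (nhds (L - Real.arctan L)) :=
    hL.sub ((Real.continuous_arctan.tendsto L).comp hL)
  have heq : L = L - Real.arctan L := by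
    apply tendsto_nhds_unique hL2
    simpa only [hrec] using hL3
  have : L = 0 := by
    have : Real.arctan L = 0 := by linarith
    exact Real.arctan_eq_zero_iff.mp this
  rwa [this] at hL

theorem stmt_14 (x₀ : ℝ) (U : ℕ → ℝ) (hU0 : U 0 = x₀)
    (hrec : ∀ n, U (n + 1) = U n - Real.arctan (U n)) :
    Filter.Tendsto U Filter.atTop (nhds 0) := by
  rcases le_or_gt 0 (U 0) with h | h
  · exact aux_nonneg U h hrec
  · have h' : Filter.Tendsto (fun n => -U n) Filter.atTop (nhds 0) := by
      apply aux_nonneg (fun n => -U n) (by simpa using h.le)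
      intro n
      simp only [hrec n, Real.arctan_neg]
      ring
    have := h'.neg
    simpa using this
end

section
/- Let f : ℝ → ℝ be n times continuously differentiable on a neighborhood of l with f(l) = l and f'(l) ≠ 1. Then there exist constants C₁, …, C_{n-1} ∈ ℝ such that the map T(x) = f(x) + Σ_{k=1}^{n-1} C_k·(f(x) - x)^k satisfies T(l) = l and T^{(j)}(l) = 0 for all 1 ≤ j ≤ n-1. -/
/-!
Put `h = f - id`, so that `h l = 0` and `h' l = f' l - 1 ≠ 0`. By Leibniz' rule, at a zero of `h`
the power `h ^ k` has vanishing derivatives of orders `< k` and `k`-th derivative `k! (h' l) ^ k`.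
So if the derivatives of orders `1, …, m` of a map vanish at `l`, adding `c h ^ (m + 1)` keeps
them zero, and since `(m + 1)! (h' l) ^ (m + 1) ≠ 0` the coefficient `c` can be chosen to cancel
the derivative of order `m + 1` as well. Inducting on `m` up to `n - 1` produces the `C k`.
-/

open Finset Nat

variable {𝕜 : Type*} [NontriviallyNormedField 𝕜] {h : 𝕜 → 𝕜} {x : 𝕜}

theorem iteratedDeriv_pow_eq_zero_of_lt {j k : ℕ} (hh : ContDiffAt 𝕜 j h x) (h0 : h x = 0)
    (hjk : j < k) : iteratedDeriv j (fun y => h y ^ k) x = 0 := by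
  induction k generalizing j with
  | zero => omega
  | succ k ih =>
    have hpow : ContDiffAt 𝕜 j (fun y => h y ^ k) x := hh.pow k
    simp only [_root_.pow_succ']
    rw [iteratedDeriv_fun_mul hh hpow]
    refine sum_eq_zero fun i hi => ?_
    rcases i with _ | i
    · simp [h0]
    · have hlt : j - (i + 1) < k := by simp at hi; omega
      rw [ih (hh.of_le (by norm_cast; omega)) hlt, mul_zero]

theorem iteratedDeriv_pow_self {k : ℕ} (hh : ContDiffAt 𝕜 k h x) (h0 : h x = 0) :
    iteratedDeriv k (fun y => h y ^ k) x = k ! * deriv h x ^ k := by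
  induction k with
  | zero => simp
  | succ k ih =>
    have hpow : ContDiffAt 𝕜 (k + 1) (fun y => h y ^ k) x := hh.pow k
    simp only [_root_.pow_succ']
    rw [iteratedDeriv_fun_mul hh hpow, sum_eq_single 1]
    · rw [Nat.add_sub_cancel, ih (hh.of_le (by norm_cast; omega)), iteratedDeriv_one,
        choose_one_right, factorial_succ]
      push_cast
      ring
    · intro i hi hi1
      rcases i with _ | i
      · simp [h0]
      · rw [iteratedDeriv_pow_eq_zero_of_lt (hh.of_le (by norm_cast; omega)) h0
          (by simp at hi; omega), mul_zero]
    · simp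

theorem exists_iteratedDeriv_add_const_mul_pow_eq_zero [CharZero 𝕜] {g : 𝕜 → 𝕜} {m : ℕ}
    (hg : ContDiffAt 𝕜 (m + 1) g x) (hh : ContDiffAt 𝕜 (m + 1) h x) (h0 : h x = 0)
    (hh' : deriv h x ≠ 0) (hgm : ∀ j, 1 ≤ j → j ≤ m → iteratedDeriv j g x = 0) :
    ∃ c : 𝕜, ∀ j, 1 ≤ j → j ≤ m + 1 →
      iteratedDeriv j (fun y => g y + c * h y ^ (m + 1)) x = 0 := by
  refine ⟨-iteratedDeriv (m + 1) g x / ((m + 1) ! * deriv h x ^ (m + 1)), fun j hj1 hjm => ?_⟩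
  have hjm' : (j : WithTop ℕ∞) ≤ m + 1 := by norm_cast
  rw [iteratedDeriv_fun_add (hg.of_le hjm') (contDiffAt_const.mul ((hh.of_le hjm').pow _)),
    iteratedDeriv_const_mul_field]
  rcases hjm.lt_or_eq with hlt | rfl
  · rw [hgm j hj1 (by omega), iteratedDeriv_pow_eq_zero_of_lt (hh.of_le hjm') h0 hlt]
    simp
  · have hfact : ((m + 1) ! : 𝕜) ≠ 0 := cast_ne_zero.mpr (factorial_ne_zero _)
    rw [iteratedDeriv_pow_self hh h0]
    field_simp
    ring

theorem exists_iteratedDeriv_add_sum_const_mul_pow_eq_zero [CharZero 𝕜] {g : 𝕜 → 𝕜}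
    (h0 : h x = 0) (hh' : deriv h x ≠ 0) :
    ∀ m : ℕ, ContDiffAt 𝕜 m g x → ContDiffAt 𝕜 m h x → ∃ C : ℕ → 𝕜, ∀ j, 1 ≤ j → j ≤ m →
      iteratedDeriv j (fun y => g y + ∑ k ∈ Icc 1 m, C k * h y ^ k) x = 0
  | 0, _, _ => ⟨0, fun j hj1 hj0 => by omega⟩
  | m + 1, hg, hh => by
    obtain ⟨C, hC⟩ := exists_iteratedDeriv_add_sum_const_mul_pow_eq_zero h0 hh' m
      (hg.of_le (by norm_cast; omega)) (hh.of_le (by norm_cast; omega))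
    have hgC : ContDiffAt 𝕜 (m + 1) (fun y => g y + ∑ k ∈ Icc 1 m, C k * h y ^ k) x := by
      fun_prop
    obtain ⟨c, hc⟩ := exists_iteratedDeriv_add_const_mul_pow_eq_zero hgC hh h0 hh' hC
    refine ⟨Function.update C (m + 1) c, fun j hj1 hjm => ?_⟩
    convert hc j hj1 hjm using 3 with y
    rw [sum_Icc_succ_top (by omega), Function.update_self, add_assoc]
    congr 2
    exact sum_congr rfl fun k hk => by
      rw [Function.update_of_ne (by simp at hk; omega)]

theorem stmt_16 (n : ℕ) (hn : 2 ≤ n) (f : ℝ → ℝ) (l : ℝ)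
    (hf : ContDiffAt ℝ n f l) (hfl : f l = l) (hf' : deriv f l ≠ 1) :
    ∃ C : ℕ → ℝ,
      (fun x => f x + ∑ k ∈ Finset.Icc 1 (n - 1), C k * (f x - x) ^ k) l = l ∧
      ∀ j, 1 ≤ j → j ≤ n - 1 →
        iteratedDeriv j
          (fun x => f x + ∑ k ∈ Finset.Icc 1 (n - 1), C k * (f x - x) ^ k) l = 0 := by
  have hderiv : deriv (fun x => f x - x) l = deriv f l - 1 := by
    rw [deriv_fun_sub (hf.differentiableAt (by norm_cast; omega)) differentiableAt_fun_id,
      deriv_id'']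
  have hf₁ : ContDiffAt ℝ (n - 1 : ℕ) f l := hf.of_le (by norm_cast; omega)
  obtain ⟨C, hC⟩ := exists_iteratedDeriv_add_sum_const_mul_pow_eq_zero
    (h := fun x => f x - x) (by simp [hfl]) (by rwa [hderiv, sub_ne_zero]) (n - 1) hf₁
    (hf₁.sub contDiffAt_id)
  refine ⟨C, ?_, hC⟩
  simp only [hfl, sub_self, add_eq_left]
  exact sum_eq_zero fun k hk => by simp [zero_pow (by simp at hk; omega : k ≠ 0)]
end
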